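/- arXiv:math/0207099 — 14 statements merged into one kernel-verified Lean document; each statement's English description precedes it below -/
import Mathlib

section
/- For all x, y, z ∈ K we have φ(x ◁ z, y ◁ z) = φ(x, y) + φ(x ◁ y, z) − φ(x, z). Consequently φ satisfies the quandle 2-cocycle condition: φ(x, z) − φ(x ◁ y, z) − φ(x, y) + φ(x ◁ z, y ◁ z) = 0 for all x, y, z ∈ K. -/
/-- For the quadratic quandle `K = 𝔽_{p²}` with `x ◁ z = θx + (1-θ)z` (where `N(θ) = θ^{p+1} = 1`)
and `φ(x, y) = ε(x·ȳ − x̄·y)` with `x̄ = x^p`, we have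
`φ(x ◁ z, y ◁ z) = φ(x, y) + φ(x ◁ y, z) − φ(x, z)`, and consequently `φ` satisfies the
quandle 2-cocycle condition. -/
theorem stmt_0 (p : ℕ) [Fact p.Prime] (θ ε : GaloisField p 2)
    (hθ : θ ^ (p + 1) = 1)
    (φ : GaloisField p 2 → GaloisField p 2 → GaloisField p 2)
    (hφ : ∀ x y, φ x y = ε * (x * y ^ p - x ^ p * y))
    (op : GaloisField p 2 → GaloisField p 2 → GaloisField p 2)
    (hop : ∀ x z, op x z = θ * x + (1 - θ) * z) :
    (∀ x y z, φ (op x z) (op y z) = φ x y + φ (op x y) z - φ x z) ∧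
    (∀ x y z, φ x z - φ (op x y) z - φ x y + φ (op x z) (op y z) = 0) := by
  have hθ' : θ ^ p * θ = 1 := by rw [← pow_succ]; exact hθ
  have key : ∀ x y z : GaloisField p 2,
      φ (op x z) (op y z) = φ x y + φ (op x y) z - φ x z := by
    intro x y z
    simp only [hφ, hop]
    simp only [add_pow_char, mul_pow, sub_pow_char, one_pow]
    linear_combination (ε * (x * y ^ p - x ^ p * y - x * z ^ p + y * z ^ p
      - y ^ p * z + x ^ p * z)) * hθ'
  exact ⟨key, fun x y z => by rw [key x y z]; ring⟩
end

section
/- For every a ∈ F_p, the sum over all x ∈ F_{p²} of u^{a·N(x)} in ℤ[C_p] equals Γ_p if a ≠ 0, and equals p²·u⁰ if a = 0. -/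
/-!
The norm `N : 𝔽_{p²} → 𝔽_p` is surjective and multiplicative, so multiplying by a fixed element of
norm `k` identifies the fibre over `1` with the fibre over any `k ≠ 0`; since `N x = 0` only for
`x = 0`, counting elements gives `p² = 1 + (p - 1)·#N⁻¹(1)`, so every nonzero fibre has `p + 1`
elements. Hence `Σₓ u^{a N(x)} = u⁰ + (p + 1) Σ_{k ≠ 0} u^{a k}`, and `k ↦ a k` permutes `𝔽_p^×`.
-/

open Finset

namespace FiniteField

variable {K K' : Type*} [Field K] [Field K'] [Algebra K K'] [Fintype K'] [DecidableEq K]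

theorem card_filter_norm_eq_zero : #{x : K' | Algebra.norm K x = 0} = 1 := by
  rw [card_eq_one]
  exact ⟨0, by ext x; simp [Algebra.norm_eq_zero_iff]⟩

theorem card_filter_norm_eq_of_ne_zero {k : K} (hk : k ≠ 0) :
    #{x : K' | Algebra.norm K x = k} = #{x : K' | Algebra.norm K x = 1} := by
  obtain ⟨y, rfl⟩ := norm_surjective K K' k
  have hy : y ≠ 0 := by rintro rfl; simp at hk
  have hy_inv : Algebra.norm K y⁻¹ * Algebra.norm K y = 1 := by
    rw [← map_mul, inv_mul_cancel₀ hy, map_one]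
  refine card_bij' (fun x _ => y⁻¹ * x) (fun x _ => y * x) ?_ ?_ ?_ ?_ <;>
    simp_all [map_mul]

theorem sum_comp_norm {M : Type*} [AddCommMonoid M] [Fintype K] (g : K → M) :
    ∑ x : K', g (Algebra.norm K x) =
      g 0 + #{x : K' | Algebra.norm K x = 1} • ∑ k ∈ univ.erase 0, g k := by
  rw [sum_comp, image_univ_of_surjective (norm_surjective K K'), ← add_sum_erase _ _ (mem_univ 0),
    card_filter_norm_eq_zero, one_smul, smul_sum]
  refine congrArg _ (sum_congr rfl fun k hk => ?_)
  rw [card_filter_norm_eq_of_ne_zero (ne_of_mem_erase hk)]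

theorem card_filter_norm_eq_one_mul_add_one [Fintype K] :
    #{x : K' | Algebra.norm K x = 1} * (Fintype.card K - 1) + 1 = Fintype.card K' := by
  have h := sum_comp_norm (K' := K') fun _ : K => 1
  simp only [sum_const, card_univ, smul_eq_mul, mul_one, card_erase_of_mem (mem_univ _)] at h
  omega

end FiniteField

theorem GaloisField.card_filter_norm_eq_one (p : ℕ) [Fact p.Prime] [Fintype (GaloisField p 2)] :
    #{x : GaloisField p 2 | Algebra.norm (ZMod p) x = 1} = p + 1 := by
  have hp := (Fact.out : p.Prime).two_le
  have h := FiniteField.card_filter_norm_eq_one_mul_add_one (K := ZMod p) (K' := GaloisField p 2)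
  rw [ZMod.card, Fintype.card_eq_nat_card, GaloisField.card p 2 two_ne_zero] at h
  obtain ⟨q, rfl⟩ := Nat.exists_eq_add_of_le hp
  refine Nat.eq_of_mul_eq_mul_right (m := q + 1) (by omega) ?_
  simp only [show 2 + q - 1 = q + 1 by omega] at h
  nlinarith

theorem Finset.sum_erase_zero_comp_mul_left {K M : Type*} [Field K] [Fintype K] [DecidableEq K]
    [AddCommMonoid M] (g : K → M) {a : K} (ha : a ≠ 0) :
    ∑ k ∈ univ.erase 0, g (a * k) = ∑ k ∈ univ.erase 0, g k :=
  sum_nbij' (a * ·) (a⁻¹ * ·) (by simp [ha]) (by simp [ha]) (by simp [ha]) (by simp [ha])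
    fun _ _ => rfl

theorem stmt_1_general (p : ℕ) [Fact p.Prime] [Fintype (GaloisField p 2)]
    (u : ZMod p → MonoidAlgebra ℤ (Multiplicative (ZMod p)))
    (Γ : MonoidAlgebra ℤ (Multiplicative (ZMod p)))
    (hΓ : Γ = u 0 + ((p : ℤ) + 1) • ∑ i ∈ Finset.univ.filter (fun i : ZMod p => i ≠ 0), u i)
    (a : ZMod p) :
    ∑ x : GaloisField p 2, u (a * Algebra.norm (ZMod p) x) =
      if a ≠ 0 then Γ else ((p : ℤ) ^ 2) • u 0 := by
  split_ifs with ha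
  · rw [FiniteField.sum_comp_norm (fun k => u (a * k)), mul_zero,
      sum_erase_zero_comp_mul_left u ha, GaloisField.card_filter_norm_eq_one, hΓ, filter_ne']
    norm_cast
  · rw [not_not.mp ha]
    simp only [zero_mul, sum_const, card_univ, Fintype.card_eq_nat_card,
      GaloisField.card p 2 two_ne_zero]
    norm_cast

/-- For every `a ∈ 𝔽_p`, the sum over all `x ∈ 𝔽_{p²}` of `u^{a·N(x)}` in `ℤ[C_p]`
equals `Γ_p = u⁰ + (p+1)·Σ_{i ≠ 0} u^i` if `a ≠ 0`, and equals `p²·u⁰` if `a = 0`. -/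
theorem stmt_1 (p : ℕ) [Fact p.Prime] [Fintype (GaloisField p 2)]
    (u : ZMod p → MonoidAlgebra ℤ (Multiplicative (ZMod p)))
    (hu : ∀ k, u k = MonoidAlgebra.of ℤ (Multiplicative (ZMod p)) (Multiplicative.ofAdd k))
    (Γ : MonoidAlgebra ℤ (Multiplicative (ZMod p)))
    (hΓ : Γ = u 0 + ((p : ℤ) + 1) • ∑ i ∈ Finset.univ.filter (fun i : ZMod p => i ≠ 0), u i)
    (a : ZMod p) :
    ∑ x : GaloisField p 2, u (a * Algebra.norm (ZMod p) x) =
      if a ≠ 0 then Γ else ((p : ℤ) ^ 2) • u 0 :=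
  stmt_1_general p u Γ hΓ a
end

section
/- Let n ≥ 0, let a : Fin n → F_p, and let r = #{i : a i ≠ 0}. Then the sum over all x : Fin n → F_{p²} of u^{Σ_{i} a_i·N(x_i)} in ℤ[C_p] equals (p²)^{n−r} · Γ_p^r. (This is the diagonalized form of the state-sum computation in the main theorem: a cocycle invariant built from an orthogonally diagonalized Hermitian form with r nonzero diagonal entries and nullity n − r equals Γ_p^r p^{2(n−r)}.) -/
/-!
Since `k ↦ u^k` turns sums into products, the sum factors over the coordinates into
`∏ i, ∑_{t ∈ 𝔽_{p²}} u^{a_i N(t)}`. A coordinate with `a_i = 0` contributes `p²`. For `a_i ≠ 0`,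
only `t = 0` has norm `0`, and the norm `𝔽_{p²}ˣ → 𝔽_pˣ` is a surjective homomorphism, so every
nonzero value is taken exactly `|ker N| = (p² - 1)/(p - 1) = p + 1` times; multiplying by `a_i`
permutes `𝔽_pˣ`, so the coordinate contributes `u⁰ + (p + 1) Σ_{c ≠ 0} u^c = Γ_p`.
-/

open Finset

theorem Fintype.sum_units_eq_sum_filter_ne_zero {G₀ M : Type*} [GroupWithZero G₀] [Fintype G₀]
    [DecidableEq G₀] [AddCommMonoid M] (g : G₀ → M) :
    ∑ x : G₀ˣ, g x = ∑ x ∈ univ.filter (· ≠ 0), g x := by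
  rw [Finset.sum_subtype _ (p := (· ≠ 0)) (fun _ => by simp) g]
  exact Equiv.sum_comp unitsEquivNeZero (fun x => g x.1)

theorem Fintype.sum_eq_add_sum_units {G₀ M : Type*} [GroupWithZero G₀] [Fintype G₀]
    [DecidableEq G₀] [AddCommMonoid M] (g : G₀ → M) :
    ∑ x, g x = g 0 + ∑ x : G₀ˣ, g x := by
  rw [Fintype.sum_units_eq_sum_filter_ne_zero, filter_ne', add_sum_erase _ _ (mem_univ _)]

theorem MonoidHom.sum_comp_of_surjective {G H M : Type*} [Group G] [Group H] [Fintype G]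
    [Fintype H] [AddCommMonoid M] (φ : G →* H) (hφ : Function.Surjective φ) (g : H → M) :
    ∑ x, g (φ x) = Nat.card φ.ker • ∑ y, g y := by
  classical
  rw [Finset.sum_comp, image_univ_of_surjective hφ, smul_sum]
  refine sum_congr rfl fun y _ => ?_
  rw [← Nat.card_congr (φ.fiberEquivKerOfSurjective hφ y), ← Fintype.card_subtype,
    ← Nat.card_eq_fintype_card]
  rfl

theorem MonoidHom.card_ker_mul_card_of_surjective {G H : Type*} [Group G] [Group H] [Fintype G]
    [Fintype H] (φ : G →* H) (hφ : Function.Surjective φ) :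
    Nat.card φ.ker * Fintype.card H = Fintype.card G := by
  have := φ.sum_comp_of_surjective hφ fun _ => 1
  simp only [sum_const, card_univ, smul_eq_mul, mul_one] at this
  exact this.symm

namespace FiniteField

variable {K L M : Type*} [Field K] [Field L] [Algebra K L] [Fintype K] [Fintype L]
  [AddCommMonoid M]

theorem sum_comp_norm_s2 [DecidableEq K] [DecidableEq L] (g : K → M) :
    ∑ x : L, g (Algebra.norm K x) =
      g 0 + Nat.card (Units.map (Algebra.norm K : L →* K)).ker • ∑ c : Kˣ, g c := by
  rw [Fintype.sum_eq_add_sum_units, Algebra.norm_zero,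
    ← MonoidHom.sum_comp_of_surjective _ (unitsMap_norm_surjective K L)]
  rfl

theorem card_ker_unitsMap_norm_mul :
    Nat.card (Units.map (Algebra.norm K : L →* K)).ker * (Fintype.card K - 1) =
      Fintype.card L - 1 := by
  classical
  simpa [Fintype.card_units] using
    MonoidHom.card_ker_mul_card_of_surjective _ (unitsMap_norm_surjective K L)

end FiniteField

namespace GaloisField

variable (p : ℕ) [Fact p.Prime]

theorem fintype_card {n : ℕ} [Fintype (GaloisField p n)] (h : n ≠ 0) :
    Fintype.card (GaloisField p n) = p ^ n :=
  Nat.card_eq_fintype_card.symm.trans (GaloisField.card p n h)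

variable [Fintype (GaloisField p 2)]

theorem card_ker_unitsMap_norm :
    Nat.card (Units.map (Algebra.norm (ZMod p) : GaloisField p 2 →* ZMod p)).ker = p + 1 := by
  have h := FiniteField.card_ker_unitsMap_norm_mul (K := ZMod p) (L := GaloisField p 2)
  rw [ZMod.card, fintype_card p two_ne_zero, ← one_pow 2, Nat.sq_sub_sq] at h
  exact Nat.eq_of_mul_eq_mul_right (Nat.sub_pos_of_lt (Fact.out : p.Prime).one_lt) h

theorem sum_comp_mul_norm {M : Type*} [AddCommMonoid M] (g : ZMod p → M) {b : ZMod p}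
    (hb : b ≠ 0) :
    ∑ x : GaloisField p 2, g (b * Algebra.norm (ZMod p) x) =
      g 0 + (p + 1) • ∑ c ∈ univ.filter (· ≠ 0), g c := by
  classical
  rw [FiniteField.sum_comp_norm_s2 (fun c => g (b * c)), card_ker_unitsMap_norm, mul_zero,
    ← Fintype.sum_units_eq_sum_filter_ne_zero,
    ← Equiv.sum_comp (Equiv.mulLeft (Units.mk0 b hb)) (fun c => g c)]
  simp only [Equiv.coe_mulLeft, Units.val_mul, Units.val_mk0]

end GaloisField

/-- Let `a : Fin n → 𝔽_p` and let `r = #{i : a i ≠ 0}`. Then the sum over all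
`x : Fin n → 𝔽_{p²}` of `u^{Σ_i a_i·N(x_i)}` in `ℤ[C_p]` equals `(p²)^{n−r}·Γ_p^r`. -/
theorem stmt_2 (p : ℕ) [Fact p.Prime] [Fintype (GaloisField p 2)]
    (u : ZMod p → MonoidAlgebra ℤ (Multiplicative (ZMod p)))
    (hu : ∀ k, u k = MonoidAlgebra.of ℤ (Multiplicative (ZMod p)) (Multiplicative.ofAdd k))
    (Γ : MonoidAlgebra ℤ (Multiplicative (ZMod p)))
    (hΓ : Γ = u 0 + ((p : ℤ) + 1) • ∑ i ∈ Finset.univ.filter (fun i : ZMod p => i ≠ 0), u i)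
    (n : ℕ) (a : Fin n → ZMod p)
    (r : ℕ) (hr : r = (Finset.univ.filter (fun i : Fin n => a i ≠ 0)).card) :
    ∑ x : Fin n → GaloisField p 2, u (∑ i, a i * Algebra.norm (ZMod p) (x i)) =
      ((p : MonoidAlgebra ℤ (Multiplicative (ZMod p))) ^ 2) ^ (n - r) * Γ ^ r := by
  classical
  have hu_sum (f : Fin n → ZMod p) : u (∑ i, f i) = ∏ i, u (f i) := by
    simp only [hu, ofAdd_sum, map_prod]
  have coord (b : ZMod p) :
      ∑ t : GaloisField p 2, u (b * Algebra.norm (ZMod p) t) = if b ≠ 0 then Γ else (p : _) ^ 2 := by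
    split_ifs with hb
    · rw [GaloisField.sum_comp_mul_norm p u hb, hΓ, ← Nat.cast_add_one, natCast_zsmul]
    · simp only [not_not.mp hb, zero_mul, sum_const, card_univ, hu 0, ofAdd_zero, map_one,
        GaloisField.fintype_card p two_ne_zero, nsmul_eq_mul, mul_one, Nat.cast_pow]
  calc ∑ x : Fin n → GaloisField p 2, u (∑ i, a i * Algebra.norm (ZMod p) (x i))
      = ∏ i, ∑ t : GaloisField p 2, u (a i * Algebra.norm (ZMod p) t) := by
        simp only [hu_sum, Fintype.prod_sum]
    _ = ∏ i, if a i ≠ 0 then Γ else (p : _) ^ 2 := by simp only [coord]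
    _ = _ := by
        rw [prod_ite, prod_const, prod_const, ← hr, mul_comm]
        congr
        have hsplit := card_filter_add_card_filter_not (s := univ) (fun i : Fin n => a i ≠ 0)
        simp only [card_univ, Fintype.card_fin] at hsplit
        omega
end

section
/- Suppose x, y ∈ V, f, g ∈ K[X] satisfy f(T)(x) = 0 and g(T)(y) = 0, and that the reversed conjugate polynomial reverse(f^σ) is coprime to g in K[X]. Then η(x, y) = 0. -/
/-!
Because `T` preserves `η`, the `η`-adjoint of `f(T)` is `f^σ(T⁻¹)`. Writing `n` for the degree
of `f^σ`, one has `reverse(f^σ)(T) = f^σ(T⁻¹) Tⁿ`, and coprimality with `g` puts every `y` with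
`g(T) y = 0` in the range of this operator: `y = f^σ(T⁻¹) w`. Hence `η(x, y) = η(f(T) x, w) = 0`.
-/

open Polynomial

theorem Polynomial.aeval_reverse_of_mul_eq_one {R A : Type*} [CommSemiring R] [Semiring A]
    [Algebra R A] {a b : A} (hba : b * a = 1) (p : R[X]) :
    aeval a p.reverse = aeval b p * a ^ p.natDegree := by
  set n := p.natDegree
  have hcancel : ∀ i ≤ n, b ^ i * a ^ n = a ^ (n - i) := fun i hi => by
    rw [← Nat.add_sub_cancel' hi, pow_add, ← mul_assoc, pow_mul_pow_eq_one i hba, one_mul,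
      Nat.add_sub_cancel_left]
  rw [aeval_eq_sum_range' (Nat.lt_succ_of_le p.reverse_natDegree_le), aeval_eq_sum_range,
    Finset.sum_mul, ← Finset.sum_range_reflect]
  refine Finset.sum_congr rfl fun i hi => ?_
  have hi : i ≤ n := Nat.lt_succ_iff.mp (Finset.mem_range.mp hi)
  rw [Nat.succ_sub_one, coeff_reverse, revAt_le (Nat.sub_le n i), Nat.sub_sub_self hi,
    smul_mul_assoc, hcancel i hi]

theorem Polynomial.mem_range_aeval_of_isCoprime {R M : Type*} [CommRing R] [AddCommGroup M]
    [Module R M] {φ : Module.End R M} {p g : R[X]} (hpg : IsCoprime p g) {y : M}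
    (hy : aeval φ g y = 0) : y ∈ LinearMap.range (aeval φ p) := by
  obtain ⟨u, v, huv⟩ := hpg
  refine ⟨aeval φ u y, ?_⟩
  simpa [mul_comm u, hy] using congr(aeval φ $huv y)

namespace LinearMap

variable {R M M₃ : Type*} [CommSemiring R] [AddCommMonoid M] [Module R M] [AddCommMonoid M₃]
  [Module R M₃] {I : R →+* R} {B : M →ₗ[R] M →ₛₗ[I] M₃} {φ ψ : Module.End R M}

theorem IsAdjointPair.pow (h : IsAdjointPair B B φ ψ) (n : ℕ) :
    IsAdjointPair B B ⇑(φ ^ n) ⇑(ψ ^ n) := by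
  induction n with
  | zero => exact isAdjointPair_one
  | succ n ih => rw [pow_succ, pow_succ']; exact ih.mul h

theorem IsAdjointPair.aeval_map (h : IsAdjointPair B B φ ψ) (p : R[X]) :
    IsAdjointPair B B ⇑(aeval φ (p.map I)) ⇑(aeval ψ p) := by
  induction p using Polynomial.induction_on' with
  | add p q hp hq =>
    rw [Polynomial.map_add, map_add, map_add]
    exact hp.add hq
  | monomial n c =>
    intro x y
    simp only [map_monomial, aeval_monomial, ← Algebra.smul_def, LinearMap.smul_apply,
      map_smulₛₗ, RingHom.id_apply, (h.pow n) x y]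

end LinearMap

/-- Let `K` be a field with involution `σ`, `V` a `K`-vector space, `η` a sesquilinear-type
form on `V`, and `T` an automorphism of `V` preserving `η`. If `f(T)(x) = 0`, `g(T)(y) = 0`,
and `reverse(f^σ)` is coprime to `g`, then `η(x, y) = 0`. -/
theorem stmt_3 (K : Type*) [Field K] (σ : K →+* K) (hσ : ∀ a, σ (σ a) = a)
    (V : Type*) [AddCommGroup V] [Module K V]
    (η : V → V → K)
    (hadd₁ : ∀ x x' y, η (x + x') y = η x y + η x' y)
    (hadd₂ : ∀ x y y', η x (y + y') = η x y + η x y')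
    (hsmul₁ : ∀ (a : K) x y, η (a • x) y = a * η x y)
    (hsmul₂ : ∀ (a : K) x y, η x (a • y) = σ a * η x y)
    (T : V ≃ₗ[K] V) (hT : ∀ x y, η (T x) (T y) = η x y)
    (f g : Polynomial K) (x y : V)
    (hfx : Polynomial.aeval (↑T : Module.End K V) f x = 0)
    (hgy : Polynomial.aeval (↑T : Module.End K V) g y = 0)
    (hcop : IsCoprime (f.map σ).reverse g) :
    η x y = 0 := by
  let B : V →ₗ[K] V →ₛₗ[σ] K := LinearMap.mk₂'ₛₗ (RingHom.id K) σ η hadd₁ hsmul₁ hadd₂ hsmul₂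
  have hTB : B.IsAdjointPair B T T.symm := fun a b => by simpa [B] using hT a (T.symm b)
  have hTT : (T.symm : Module.End K V) * T = 1 := by ext; simp
  have hff : (f.map σ).map σ = f := by
    rw [Polynomial.map_map, show σ.comp σ = RingHom.id K from RingHom.ext hσ, Polynomial.map_id]
  obtain ⟨z, rfl⟩ := mem_range_aeval_of_isCoprime hcop hgy
  rw [aeval_reverse_of_mul_eq_one hTT, Module.End.mul_apply]
  calc η x (aeval (T.symm : Module.End K V) (f.map σ) _)
      = B (aeval (T : Module.End K V) ((f.map σ).map σ) x) _ := (hTB.aeval_map _ _ _).symm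
    _ = 0 := by rw [hff, hfx, LinearMap.map_zero₂]
end

section
/- The characteristic polynomial det(T·I_m − M_m) of M_m equals (T − 1)·Σ_{i=0}^{m−1} θ^{m−1−i}·T^i, i.e., (T−1)·(T^m − θ^m)/(T − θ). -/
open Polynomial Matrix Finset

noncomputable def Dmat {K : Type*} [Field K] (θ : K) (n : ℕ) (a : Polynomial K) :
    Matrix (Fin n) (Fin n) (Polynomial K) :=
  fun i j => (if (j:ℕ) = (i:ℕ) then X else 0) -
    (if (i:ℕ) = 0 then (if (j:ℕ) = n-1 then a else 0)
     else if (j:ℕ) = (i:ℕ)-1 then C θ else if (j:ℕ) = n-1 then C (1-θ) else 0)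

lemma detD {K : Type*} [Field K] (θ : K) : ∀ (n : ℕ) (a : Polynomial K),
    (Dmat θ (n+1) a).det =
      X^(n+1) - C (1-θ) * (∑ k ∈ range n, C (θ^k) * X^(n-k)) - a * C (θ^n) := by
  intro n
  induction n with
  | zero =>
    intro a
    rw [show ((0:ℕ)+1) = 1 from rfl, Matrix.det_fin_one]
    simp [Dmat]
  | succ n ih =>
    intro a
    rw [Matrix.det_succ_row_zero, Fin.sum_univ_castSucc]
    have hminor0 : (Dmat θ (n+2) a).submatrix Fin.succ ((0 : Fin (n+2)).succAbove)
        = Dmat θ (n+1) (C (1-θ)) := by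
      ext i j : 2
      have hi := i.isLt
      have hj := j.isLt
      simp only [Matrix.submatrix_apply, Fin.succAbove_zero, Dmat, Fin.val_succ,
        Nat.add_sub_cancel]
      split_ifs <;> first | rfl | contradiction | omega
    have hdiag : ∀ i : Fin (n+1), ((Dmat θ (n+2) a).submatrix Fin.succ
        ((Fin.last (n+1)).succAbove)) i i = -(C θ) := by
      intro i
      have e1 : ¬((i:ℕ) = (i:ℕ)+1) := by omega
      simp [Dmat, Fin.succAbove_last, e1]
    have hminorlast : ((Dmat θ (n+2) a).submatrix Fin.succ
        ((Fin.last (n+1)).succAbove)).det = (-(C θ))^(n+1) := by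
      rw [Matrix.det_of_upperTriangular]
      · rw [Finset.prod_congr rfl (fun i _ => hdiag i), Finset.prod_const]
        simp
      · intro i j hij
        have hij' : (j:ℕ) < (i:ℕ) := hij
        have e1 : ¬((j:ℕ) = (i:ℕ)+1) := by omega
        have e2 : ¬((j:ℕ) = (i:ℕ)) := by omega
        have e3 : ¬((j:ℕ) = n+1) := by omega
        simp [Dmat, Fin.succAbove_last, e1, e2, e3]
    have hzero : ∀ j : Fin (n+1), j ≠ 0 →
        Dmat θ (n+2) a 0 (Fin.castSucc j) = 0 := by
      intro j hj
      have hj' : (j:ℕ) ≠ 0 := fun h => hj (Fin.ext h)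
      have h1 : ¬((j:ℕ) = n+1) := by omega
      simp [Dmat, hj', h1]
    rw [Finset.sum_eq_single_of_mem 0 (Finset.mem_univ 0)
      (fun j _ hj => by rw [hzero j hj]; ring)]
    have h00 : Dmat θ (n+2) a 0 (Fin.castSucc 0) = X := by
      have h1 : ¬((0:ℕ) = n+1) := by omega
      simp [Dmat, h1]
    have hlastval : Dmat θ (n+2) a 0 (Fin.last (n+1)) = -a := by
      have h1 : ¬((n+1:ℕ) = 0) := by omega
      simp [Dmat, Fin.val_last, h1]
    rw [h00, hlastval, Fin.castSucc_zero, hminor0, hminorlast, ih]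
    have hx : ((-1:Polynomial K))^(((Fin.last (n+1)):Fin (n+2)):ℕ) * -a * (-(C θ))^(n+1)
        = -(a * C (θ^(n+1))) := by
      rw [Fin.val_last, neg_pow (C θ) (n+1), map_pow]
      calc ((-1:Polynomial K))^(n+1) * -a * ((-1)^(n+1) * (C θ)^(n+1))
          = ((-1:Polynomial K))^((n+1)+(n+1)) * (-a * (C θ)^(n+1)) := by
            rw [pow_add]; ring
        _ = -(a * (C θ)^(n+1)) := by rw [Even.neg_one_pow ⟨n+1, rfl⟩]; ring
    rw [hx]
    have hS : (∑ k ∈ range (n+1), C (θ^k) * X^(n+1-k))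
        = X * (∑ k ∈ range n, C (θ^k) * X^(n-k)) + C (θ^n) * X := by
      rw [Finset.sum_range_succ, Finset.mul_sum]
      congr 1
      · apply Finset.sum_congr rfl
        intro k hk
        rw [Finset.mem_range] at hk
        rw [show n+1-k = (n-k)+1 by omega, pow_succ]
        ring
      · rw [show n+1-n = 1 by omega, pow_one]
    rw [hS]
    simp only [Fin.coe_castSucc, Fin.val_zero, pow_zero, one_mul]
    ring

lemma key_id {K : Type*} [Field K] (θ : K) (n : ℕ) :
    (X:Polynomial K)^(n+1) - C (1-θ) * (∑ k ∈ range n, C (θ^k) * X^(n-k)) - C (θ^n)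
      = (X - 1) * ∑ i ∈ range (n+1), C (θ ^ (n-i)) * X^i := by
  have hA : (X:Polynomial K) * ∑ i ∈ range (n+1), C (θ^(n-i)) * X^i
      = (∑ i ∈ range n, C (θ^(n-i)) * X^(i+1)) + X^(n+1) := by
    rw [Finset.mul_sum, Finset.sum_range_succ]
    congr 1
    · exact Finset.sum_congr rfl (fun i _ => by ring)
    · rw [Nat.sub_self, pow_zero, Polynomial.C_1]; ring
  have hB : (∑ i ∈ range (n+1), C (θ^(n-i)) * X^i)
      = (∑ i ∈ range n, C (θ^(n-1-i)) * X^(i+1)) + C (θ^n) := by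
    rw [Finset.sum_range_succ']
    congr 1
    · apply Finset.sum_congr rfl
      intro i hi
      rw [Finset.mem_range] at hi
      rw [show n - (i+1) = n-1-i by omega]
    · rw [Nat.sub_zero, pow_zero, mul_one]
  have hC : (∑ k ∈ range n, C (θ^k) * X^(n-k))
      = ∑ j ∈ range n, C (θ^(n-1-j)) * X^(j+1) := by
    rw [← Finset.sum_range_reflect]
    apply Finset.sum_congr rfl
    intro j hj
    rw [Finset.mem_range] at hj
    rw [show n - (n-1-j) = j+1 by omega]
  have hD : C (1-θ) * (∑ j ∈ range n, C (θ^(n-1-j)) * X^(j+1))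
      = ∑ i ∈ range n, (C (θ^(n-1-i)) - C (θ^(n-i))) * X^(i+1) := by
    rw [Finset.mul_sum]
    apply Finset.sum_congr rfl
    intro i hi
    rw [Finset.mem_range] at hi
    have h5 : (1-θ)*θ^(n-1-i) = θ^(n-1-i) - θ^(n-i) := by
      rw [show n-i = (n-1-i)+1 by omega, pow_succ]; ring
    rw [← mul_assoc, ← C_mul, h5, C_sub]
  rw [sub_mul, one_mul, hA, hB, hC, hD]
  simp only [sub_mul]
  rw [Finset.sum_sub_distrib]
  ring




/-- The characteristic polynomial of the matrix `M_m` (first row `(0,…,0,1)`; row `i ≥ 2` has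
`θ` in position `i−1`, `1−θ` in position `m`, and `0` elsewhere) equals
`(T − 1)·Σ_{i=0}^{m−1} θ^{m−1−i}·T^i = (T−1)·(T^m − θ^m)/(T − θ)`. -/
theorem stmt_5 (K : Type*) [Field K] (θ : K) (m : ℕ) (hm : 1 ≤ m)
    (M : Matrix (Fin m) (Fin m) K)
    (hM : ∀ i j : Fin m, M i j =
      if (i : ℕ) = 0 then (if (j : ℕ) = m - 1 then 1 else 0)
      else if (j : ℕ) = (i : ℕ) - 1 then θ
      else if (j : ℕ) = m - 1 then 1 - θ else 0) :
    M.charpoly =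
      (Polynomial.X - 1) *
        ∑ i ∈ Finset.range m, Polynomial.C (θ ^ (m - 1 - i)) * Polynomial.X ^ i := by
  obtain ⟨n, rfl⟩ : ∃ n, m = n+1 := ⟨m-1, by omega⟩
  have hcm : charmatrix M = Dmat θ (n+1) 1 := by
    funext i j
    rw [Matrix.charmatrix_apply, hM i j, Dmat]
    congr 1
    · simp only [Matrix.diagonal_apply,
        show (i = j) ↔ ((j:ℕ) = (i:ℕ)) from by rw [Fin.ext_iff]; exact eq_comm]
    · rw [apply_ite C, apply_ite C, apply_ite C, apply_ite C]
      simp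
  rw [Matrix.charpoly, hcm, detD, one_mul, key_id]
  simp only [Nat.add_sub_cancel]
end

section
/- Suppose θ ≠ 0. For every ξ ∈ K, the eigenspace {x ∈ K^m : M_m·x = ξ·x} has dimension at most 1 over K. -/
/-!
If `M x = ξ x` and the last coordinate of `x` vanishes, the rows of `M` read `ξ x₀ = 0` and
`ξ xᵢ = θ xᵢ₋₁` for `i ≥ 1`. For `ξ = 0` this kills every `xᵢ₋₁` since `θ ≠ 0`, and for `ξ ≠ 0`
it propagates `x₀ = 0` upwards. So evaluation at the last coordinate is injective on each
eigenspace, which therefore has dimension at most one.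
-/

open Module Matrix

theorem Submodule.finrank_le_one_of_forall_eq_zero {K V : Type*} [DivisionRing K] [AddCommGroup V]
    [Module K V] (f : V →ₗ[K] K) (p : Submodule K V) (h : ∀ x ∈ p, f x = 0 → x = 0) :
    finrank K p ≤ 1 := by
  have hinj : Function.Injective (f.comp p.subtype) := by
    rw [← LinearMap.ker_eq_bot, LinearMap.ker_eq_bot']
    exact fun x hx => Subtype.ext (h x x.2 hx)
  simpa using LinearMap.finrank_le_finrank_of_injective hinj

def thetaMatrix {K : Type*} [Ring K] (θ : K) (m : ℕ) : Matrix (Fin m) (Fin m) K :=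
  Matrix.of fun i j =>
    if (i : ℕ) = 0 then (if (j : ℕ) = m - 1 then 1 else 0)
    else if (j : ℕ) = (i : ℕ) - 1 then θ
    else if (j : ℕ) = m - 1 then 1 - θ else 0

section
variable {K : Type*} [Ring K] {n : ℕ}

theorem thetaMatrix_mulVec_zero (θ : K) (x : Fin (n + 1) → K) :
    (thetaMatrix θ (n + 1) *ᵥ x) 0 = x (Fin.last n) := by
  simp [thetaMatrix, mulVec, dotProduct, Fin.sum_univ_castSucc, (Fin.is_lt _).ne]

theorem thetaMatrix_mulVec_succ (θ : K) (x : Fin (n + 1) → K) (i : Fin n) :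
    (thetaMatrix θ (n + 1) *ᵥ x) i.succ = θ * x i.castSucc + (1 - θ) * x (Fin.last n) := by
  simp [thetaMatrix, mulVec, dotProduct, Fin.sum_univ_castSucc, (Fin.is_lt _).ne,
    i.is_lt.ne', Fin.val_inj]

theorem eq_zero_of_thetaMatrix_mulVec_eq_smul [NoZeroDivisors K] {θ : K} (hθ : θ ≠ 0) {ξ : K}
    {x : Fin (n + 1) → K} (hx : thetaMatrix θ (n + 1) *ᵥ x = ξ • x) (hlast : x (Fin.last n) = 0) :
    x = 0 := by
  have hzero : ξ * x 0 = 0 := by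
    simpa [thetaMatrix_mulVec_zero, hlast] using (congrFun hx 0).symm
  have hsucc (i : Fin n) : ξ * x i.succ = θ * x i.castSucc := by
    simpa [thetaMatrix_mulVec_succ, hlast] using (congrFun hx i.succ).symm
  funext k
  rcases eq_or_ne ξ 0 with rfl | hξ
  · refine Fin.lastCases hlast (fun i => ?_) k
    simpa [hθ] using (hsucc i).symm
  · induction k using Fin.induction with
    | zero => simpa [hξ] using hzero
    | succ i ih => simpa [hξ, ih] using hsucc i
end

theorem stmt_7_general (K : Type*) [Field K] (θ : K) (hθ : θ ≠ 0) (m : ℕ)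
    (M : Matrix (Fin m) (Fin m) K)
    (hM : ∀ i j : Fin m, M i j =
      if (i : ℕ) = 0 then (if (j : ℕ) = m - 1 then 1 else 0)
      else if (j : ℕ) = (i : ℕ) - 1 then θ
      else if (j : ℕ) = m - 1 then 1 - θ else 0)
    (ξ : K) :
    Module.finrank K (Module.End.eigenspace M.mulVecLin ξ) ≤ 1 := by
  obtain rfl : M = thetaMatrix θ m := Matrix.ext hM
  obtain _ | n := m
  · simp [Module.finrank_zero_of_subsingleton]
  refine Submodule.finrank_le_one_of_forall_eq_zero (LinearMap.proj (Fin.last n)) _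
    fun x hx hlast => ?_
  rw [Module.End.mem_eigenspace_iff] at hx
  exact eq_zero_of_thetaMatrix_mulVec_eq_smul hθ hx hlast

/-- Suppose `θ ≠ 0`. For every `ξ ∈ K`, the eigenspace `{x ∈ K^m : M_m·x = ξ·x}`
has dimension at most 1 over `K`. -/
theorem stmt_7 (K : Type*) [Field K] (θ : K) (hθ : θ ≠ 0) (m : ℕ) (hm : 1 ≤ m)
    (M : Matrix (Fin m) (Fin m) K)
    (hM : ∀ i j : Fin m, M i j =
      if (i : ℕ) = 0 then (if (j : ℕ) = m - 1 then 1 else 0)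
      else if (j : ℕ) = (i : ℕ) - 1 then θ
      else if (j : ℕ) = m - 1 then 1 - θ else 0)
    (ξ : K) :
    Module.finrank K (Module.End.eigenspace M.mulVecLin ξ) ≤ 1 :=
  stmt_7_general K θ hθ m M hM ξ
end

section
/- Suppose θ ≠ 0, the image of m in K is zero (i.e., the characteristic of K divides m), and x ∈ K^m satisfies M_m·x = θ·x. Then Σ_{i=1}^m x_i = C(m,2)·(1 − θ^{-1})·x_m, where C(m,2) = m(m−1)/2 is the binomial coefficient (cast into K) and x_m is the last coordinate of x. -/
/-- Suppose `θ ≠ 0`, the image of `m` in `K` is zero, and `x ∈ K^m` satisfies `M_m·x = θ·x`.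
Then `Σ_{i=1}^m x_i = C(m,2)·(1 − θ⁻¹)·x_m`. -/
theorem stmt_8 (K : Type*) [Field K] (θ : K) (hθ : θ ≠ 0) (m : ℕ) (hm : 1 ≤ m)
    (hmK : (m : K) = 0)
    (M : Matrix (Fin m) (Fin m) K)
    (hM : ∀ i j : Fin m, M i j =
      if (i : ℕ) = 0 then (if (j : ℕ) = m - 1 then 1 else 0)
      else if (j : ℕ) = (i : ℕ) - 1 then θ
      else if (j : ℕ) = m - 1 then 1 - θ else 0)
    (x : Fin m → K) (hx : M.mulVec x = θ • x) :
    ∑ i, x i = (m.choose 2 : K) * (1 - θ⁻¹) * x ⟨m - 1, by omega⟩ := by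
  set c : K := (θ⁻¹ - 1) * x ⟨m - 1, by omega⟩ with hc
  have hrow : ∀ i : ℕ, (h1 : 1 ≤ i) → (h2 : i < m) →
      θ * x ⟨i - 1, by omega⟩ + (1 - θ) * x ⟨m - 1, by omega⟩ = θ * x ⟨i, h2⟩ := by
    intro i h1 h2
    have h := congrFun hx ⟨i, h2⟩
    simp only [Matrix.mulVec, dotProduct, Pi.smul_apply, smul_eq_mul] at h
    rw [Finset.sum_congr rfl (fun j _ => by rw [hM ⟨i, h2⟩ j])] at h
    simp only [show ¬ ((⟨i, h2⟩ : Fin m) : ℕ) = 0 by simpa using by omega, if_false] at h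
    have hne : i - 1 ≠ m - 1 := by omega
    rw [show (∑ j : Fin m, (if (j : ℕ) = (⟨i, h2⟩ : Fin m) - 1 then θ
        else if (j : ℕ) = m - 1 then 1 - θ else 0) * x j)
      = ∑ j : Fin m, ((if j = (⟨i - 1, by omega⟩ : Fin m) then θ * x j else 0)
        + (if j = (⟨m - 1, by omega⟩ : Fin m) then (1 - θ) * x j else 0)) from
      Finset.sum_congr rfl (fun j _ => by
        rcases eq_or_ne (j : ℕ) (i - 1) with hj | hj <;>
        rcases eq_or_ne (j : ℕ) (m - 1) with hj2 | hj2 <;>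
        simp_all [Fin.ext_iff])] at h
    rw [Finset.sum_add_distrib, Finset.sum_ite_eq', Finset.sum_ite_eq'] at h
    simpa using h
  have hθc : θ * c = (1 - θ) * x ⟨m - 1, by omega⟩ := by
    rw [hc]; field_simp
  have hform : ∀ i : ℕ, (h2 : i < m) → x ⟨i, h2⟩ = x ⟨0, by omega⟩ + (i : K) * c := by
    intro i
    induction i with
    | zero => intro h2; simp
    | succ n ih =>
      intro h2
      have hn := ih (by omega)
      have hr := hrow (n+1) (by omega) h2
      simp only [Nat.add_sub_cancel] at hr
      have hstep : x ⟨n+1, h2⟩ = x ⟨n, by omega⟩ + c := by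
        apply mul_left_cancel₀ hθ
        rw [mul_add, hθc, ← hr]
      rw [hstep, hn]
      push_cast; ring
  -- sum formula
  have hsum : ∑ i, x i = (m : K) * x ⟨0, by omega⟩ + (m.choose 2 : K) * c := by
    have e1 : ∑ i : Fin m, x i = ∑ i : Fin m, (x ⟨0, by omega⟩ + (i : K) * c) :=
      Finset.sum_congr rfl (fun i _ => by rw [← Fin.eta i i.isLt]; exact hform i.1 i.2)
    rw [e1]
    rw [Finset.sum_add_distrib, Finset.sum_const, ← Finset.sum_mul]
    simp only [Finset.card_univ, Fintype.card_fin, nsmul_eq_mul]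
    congr 2
    rw [← Nat.cast_sum]
    norm_cast
    rw [Fin.sum_univ_eq_sum_range (fun i => i), Finset.sum_range_id, Nat.choose_two_right]
  rw [hsum, hmK, zero_mul, zero_add]
  -- now: choose * c = choose * (1-θ⁻¹) * x
  have h2C : (m.choose 2 : K) + (m.choose 2 : K) = 0 := by
    have h : m.choose 2 * 2 = m * (m - 1) := by
      rw [Nat.choose_two_right]
      exact Nat.div_mul_cancel (Nat.even_mul_pred_self m).two_dvd
    have : ((m.choose 2 * 2 : ℕ) : K) = 0 := by
      rw [h]; push_cast; rw [hmK, zero_mul]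
    push_cast at this; linear_combination this
  have hCneg : (m.choose 2 : K) = -(m.choose 2 : K) := by linear_combination h2C
  rw [hc, show (m.choose 2 : K) * ((θ⁻¹ - 1) * x ⟨m - 1, by omega⟩)
      = -(m.choose 2 : K) * ((1 - θ⁻¹) * x ⟨m - 1, by omega⟩) by ring, ← hCneg]
  ring
end

section
/- The set {x ∈ K : x^m = θ^m and x^n = 1} has the same (finite) cardinality as the set {x ∈ K : x^c = 1} of c-th roots of unity in K. In particular, if K contains c distinct c-th roots of unity, the number of common roots in K of X^m − θ^m and X^n − 1 is exactly c. -/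
lemma aux_coprime_10 (q m n : ℕ) (hq : q ≠ 0) (hm : m ≠ 0) (hn : n ≠ 0)
    (hdvd : q ∣ Nat.lcm m n) :
    Nat.Coprime (q / Nat.gcd q m) (q / Nat.gcd q n) := by
  by_contra hcop
  obtain ⟨r, hr, hra⟩ := Nat.exists_prime_and_dvd hcop
  have h1 : r ∣ q / Nat.gcd q m := hra.trans (Nat.gcd_dvd_left _ _)
  have h2 : r ∣ q / Nat.gcd q n := hra.trans (Nat.gcd_dvd_right _ _)
  have ha0 : q / Nat.gcd q m ≠ 0 :=
    Nat.div_ne_zero_iff_of_dvd (Nat.gcd_dvd_left q m) |>.mpr ⟨hq, Nat.gcd_ne_zero_left hq⟩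
  have hb0 : q / Nat.gcd q n ≠ 0 :=
    Nat.div_ne_zero_iff_of_dvd (Nat.gcd_dvd_left q n) |>.mpr ⟨hq, Nat.gcd_ne_zero_left hq⟩
  have f1 : 0 < (q / Nat.gcd q m).factorization r := hr.factorization_pos_of_dvd ha0 h1
  have f2 : 0 < (q / Nat.gcd q n).factorization r := hr.factorization_pos_of_dvd hb0 h2
  rw [Nat.factorization_div (Nat.gcd_dvd_left q m), Finsupp.tsub_apply,
    Nat.factorization_gcd hq hm, Finsupp.inf_apply] at f1
  rw [Nat.factorization_div (Nat.gcd_dvd_left q n), Finsupp.tsub_apply,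
    Nat.factorization_gcd hq hn, Finsupp.inf_apply] at f2
  have hle : q.factorization ≤ (Nat.lcm m n).factorization :=
    (Nat.factorization_le_iff_dvd hq (Nat.lcm_ne_zero hm hn)).mpr hdvd
  have hler : q.factorization r ≤ (Nat.lcm m n).factorization r := hle r
  rw [Nat.factorization_lcm hm hn, Finsupp.sup_apply] at hler
  omega

/-- Let `K` be a field of characteristic `p`, `m, n ≥ 1` with `p ∤ mn`, `c = gcd(m, n)`,
`θ ≠ 0` of multiplicative order `q`, and suppose `q ∣ mn/c`. Then the set
`{x ∈ K : x^m = θ^m and x^n = 1}` is finite and has the same cardinality as the set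
`{x ∈ K : x^c = 1}` of `c`-th roots of unity in `K`. -/
theorem stmt_10 (p : ℕ) (hp : p.Prime) (K : Type*) [Field K] [CharP K p]
    (m n : ℕ) (hm : 1 ≤ m) (hn : 1 ≤ n) (hpmn : ¬ p ∣ m * n)
    (c : ℕ) (hc : c = Nat.gcd m n)
    (θ : K) (hθ : θ ≠ 0) (q : ℕ) (hq : q = orderOf θ) (hqd : q ∣ m * n / c) :
    {x : K | x ^ m = θ ^ m ∧ x ^ n = 1}.Finite ∧
    {x : K | x ^ m = θ ^ m ∧ x ^ n = 1}.ncard = {x : K | x ^ c = 1}.ncard := by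
  classical
  have hm0 : m ≠ 0 := by omega
  have hn0 : n ≠ 0 := by omega
  have hlcm : m * n / c = Nat.lcm m n := by rw [hc]; rfl
  have hq0 : q ≠ 0 := by
    rintro rfl
    exact Nat.lcm_ne_zero hm0 hn0 (by rw [← hlcm]; exact Nat.eq_zero_of_zero_dvd hqd)
  have hcop := aux_coprime_10 q m n hq0 hm0 hn0 (hlcm ▸ hqd)
  obtain ⟨k, hk1, hk0⟩ := Nat.chineseRemainder hcop 1 0
  set x₀ : K := θ ^ k with hx₀
  have hx₀n : x₀ ^ n = 1 := by
    rw [hx₀, ← pow_mul, ← orderOf_dvd_iff_pow_eq_one, ← hq]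
    have hb : q / Nat.gcd q n ∣ k := (Nat.modEq_zero_iff_dvd).mp hk0
    calc q = q / Nat.gcd q n * Nat.gcd q n := (Nat.div_mul_cancel (Nat.gcd_dvd_left q n)).symm
    _ ∣ k * n := mul_dvd_mul hb (Nat.gcd_dvd_right q n)
  have hx₀m : x₀ ^ m = θ ^ m := by
    have hmod : k * m ≡ m [MOD q] := by
      have h1 : k * m ≡ 1 * m [MOD q / Nat.gcd q m * m] := hk1.mul_right' m
      have h2 : q ∣ q / Nat.gcd q m * m := by
        calc q = q / Nat.gcd q m * Nat.gcd q m := (Nat.div_mul_cancel (Nat.gcd_dvd_left q m)).symm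
        _ ∣ q / Nat.gcd q m * m := mul_dvd_mul_left _ (Nat.gcd_dvd_right q m)
      simpa using h1.of_dvd h2
    rw [hx₀, ← pow_mul]
    calc θ ^ (k * m) = θ ^ (k * m % orderOf θ) := (pow_mod_orderOf θ _).symm
    _ = θ ^ (m % orderOf θ) := by rw [← hq, hmod]
    _ = θ ^ m := pow_mod_orderOf θ m
  have hx₀0 : x₀ ≠ 0 := pow_ne_zero _ hθ
  have hset : {x : K | x ^ m = θ ^ m ∧ x ^ n = 1} = (fun y => x₀ * y) '' {x : K | x ^ c = 1} := by
    ext x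
    simp only [Set.mem_setOf_eq, Set.mem_image]
    constructor
    · rintro ⟨hxm, hxn⟩
      refine ⟨x / x₀, ?_, by field_simp⟩
      have h1 : (x / x₀) ^ m = 1 := by
        rw [div_pow, hxm, hx₀m, div_self (pow_ne_zero _ hθ)]
      have h2 : (x / x₀) ^ n = 1 := by rw [div_pow, hxn, hx₀n, div_one]
      have : orderOf (x / x₀) ∣ c := by
        rw [hc]
        exact Nat.dvd_gcd (orderOf_dvd_of_pow_eq_one h1) (orderOf_dvd_of_pow_eq_one h2)
      exact orderOf_dvd_iff_pow_eq_one.mp this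
    · rintro ⟨y, hy, rfl⟩
      have hyo : orderOf y ∣ c := orderOf_dvd_of_pow_eq_one hy
      have hym : y ^ m = 1 :=
        orderOf_dvd_iff_pow_eq_one.mp (hyo.trans (hc ▸ Nat.gcd_dvd_left m n))
      have hyn : y ^ n = 1 :=
        orderOf_dvd_iff_pow_eq_one.mp (hyo.trans (hc ▸ Nat.gcd_dvd_right m n))
      exact ⟨by rw [mul_pow, hx₀m, hym, mul_one], by rw [mul_pow, hx₀n, hyn, mul_one]⟩
  have hfin : {x : K | x ^ m = θ ^ m ∧ x ^ n = 1}.Finite := by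
    apply Set.Finite.subset (Polynomial.nthRoots n (1 : K)).toFinset.finite_toSet
    intro x hx
    simp only [Multiset.mem_toFinset, Finset.mem_coe,
      Polynomial.mem_nthRoots (by omega : 0 < n)]
    exact hx.2
  exact ⟨hfin, by
    rw [hset, Set.ncard_image_of_injective _ (mul_right_injective₀ hx₀0)]⟩
end

section
/- Let f ∈ K[X] be irreducible and n ≥ 1 an integer with f dividing X^n − a^n. Then the multiplicity of f as a factor of X^n − a^n equals p^{v_p(n)}, where v_p(n) is the p-adic valuation of n (the exponent of p in the factorization of n). -/
open Polynomial

/-- Let `K` be a field of characteristic `p`, `a ∈ K` nonzero, `f ∈ K[X]` irreducible, and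
`n ≥ 1` with `f ∣ X^n − a^n`. Then the multiplicity of `f` in `X^n − a^n` is exactly
`p^{v_p(n)}`: i.e. `f^{p^{v_p(n)}}` divides `X^n − a^n` but `f^{p^{v_p(n)}+1}` does not. -/
theorem stmt_12 (p : ℕ) (hp : p.Prime) (K : Type*) [Field K] [CharP K p]
    (a : K) (ha : a ≠ 0) (f : Polynomial K) (hf : Irreducible f)
    (n : ℕ) (hn : 1 ≤ n)
    (hdvd : f ∣ Polynomial.X ^ n - Polynomial.C (a ^ n)) :
    f ^ (p ^ (n.factorization p)) ∣ Polynomial.X ^ n - Polynomial.C (a ^ n) ∧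
    ¬ f ^ (p ^ (n.factorization p) + 1) ∣ Polynomial.X ^ n - Polynomial.C (a ^ n) := by
  haveI := hp.one_lt
  haveI : Fact p.Prime := ⟨hp⟩
  set k := n.factorization p with hk
  set m := n / p ^ k with hmdef
  have hn0 : n ≠ 0 := by omega
  have hnm : p ^ k * m = n := Nat.ordProj_mul_ordCompl_eq_self n p
  have hpm : ¬ p ∣ m := Nat.not_dvd_ordCompl hp hn0
  have hm0 : m ≠ 0 := by
    intro h; rw [h, mul_zero] at hnm; exact hn0 hnm.symm
  have hmK : (m : K) ≠ 0 := by
    rwa [Ne, CharP.cast_eq_zero_iff K p m]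
  set g : Polynomial K := X ^ m - C (a ^ m) with hg
  have key : g ^ (p ^ k) = X ^ n - C (a ^ n) := by
    rw [hg, sub_pow_char_pow, ← pow_mul, ← C_pow, ← pow_mul, mul_comm m, hnm]
  have hsep : g.Separable := separable_X_pow_sub_C (a ^ m) hmK (pow_ne_zero m ha)
  have hsq : Squarefree g := hsep.squarefree
  have hfg : f ∣ g := by
    have : f ∣ g ^ (p ^ k) := by rw [key]; exact hdvd
    exact hf.prime.dvd_of_dvd_pow this
  obtain ⟨h, hh⟩ := hfg
  have hfh : ¬ f ∣ h := by
    intro hd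
    exact hf.not_isUnit (hsq f (by rw [hh]; exact mul_dvd_mul_left f hd))
  constructor
  · rw [← key, hh, mul_pow]
    exact Dvd.intro _ rfl
  · rw [← key, hh, mul_pow]
    intro hDvd
    rw [pow_succ] at hDvd
    have hfpk : f ^ (p ^ k) ≠ 0 := pow_ne_zero _ hf.ne_zero
    have : f ∣ h ^ (p ^ k) := (mul_dvd_mul_iff_left hfpk).mp hDvd
    exact hfh (hf.prime.dvd_of_dvd_pow this)
end

section
/- For every k ≥ 1, f_k'·f_{k−1} − f_k·f_{k−1}' = z_k · Σ_{i=1}^{k} y_i·f_{i−1}² in R[X], where f' denotes the formal derivative of f with respect to X. -/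
open Polynomial in
private lemma aux14 (R : Type*) [CommRing R] (y z : ℕ → R) (f : ℕ → Polynomial R)
    (h0 : f 0 = 1)
    (hrec : ∀ k, 1 ≤ k → f k = f (k - 1) +
      Polynomial.C (z k) * Polynomial.X * ∑ i ∈ Finset.Icc 1 k, Polynomial.C (y i) * f (i - 1))
    (k : ℕ) (hk : 1 ≤ k) :
    (∑ i ∈ Finset.Icc 1 k, C (y i) * f (i-1)) * f (k-1)
      + X * (derivative (∑ i ∈ Finset.Icc 1 k, C (y i) * f (i-1)) * f (k-1)
             - (∑ i ∈ Finset.Icc 1 k, C (y i) * f (i-1)) * derivative (f (k-1)))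
    = ∑ i ∈ Finset.Icc 1 k, C (y i) * f (i-1)^2 := by
  induction k, hk using Nat.le_induction with
  | base => simp [h0]
  | succ k hk ih =>
    have hs : ∀ g : ℕ → R[X], ∑ i ∈ Finset.Icc 1 (k+1), g i = (∑ i ∈ Finset.Icc 1 k, g i) + g (k+1) :=
      fun g => Finset.sum_Icc_succ_top (by omega) g
    have key : (∑ i ∈ Finset.Icc 1 k, C (y i) * f (i-1)) * f k
        + X * (derivative (∑ i ∈ Finset.Icc 1 k, C (y i) * f (i-1)) * f k
               - (∑ i ∈ Finset.Icc 1 k, C (y i) * f (i-1)) * derivative (f k))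
      = ∑ i ∈ Finset.Icc 1 k, C (y i) * f (i-1)^2 := by
      rw [hrec k hk]
      simp only [derivative_add, derivative_mul, derivative_C, derivative_X, zero_mul, mul_one,
        zero_add]
      linear_combination ih
    simp only [hs, Nat.add_sub_cancel, derivative_add, derivative_mul, derivative_C, zero_mul,
      zero_add]
    linear_combination key

/-- Let `f_0 = 1` and `f_k = f_{k−1} + z_k·X·Σ_{i=1}^{k} y_i·f_{i−1}` for `k ≥ 1`. Then for
every `k ≥ 1`, `f_k'·f_{k−1} − f_k·f_{k−1}' = z_k·Σ_{i=1}^{k} y_i·f_{i−1}²`. -/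
theorem stmt_14 (R : Type*) [CommRing R] (y z : ℕ → R) (f : ℕ → Polynomial R)
    (h0 : f 0 = 1)
    (hrec : ∀ k, 1 ≤ k → f k = f (k - 1) +
      Polynomial.C (z k) * Polynomial.X * ∑ i ∈ Finset.Icc 1 k, Polynomial.C (y i) * f (i - 1))
    (k : ℕ) (hk : 1 ≤ k) :
    Polynomial.derivative (f k) * f (k - 1) - f k * Polynomial.derivative (f (k - 1)) =
      Polynomial.C (z k) * ∑ i ∈ Finset.Icc 1 k, Polynomial.C (y i) * (f (i - 1)) ^ 2 := by
  have key := aux14 R y z f h0 hrec k hk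
  rw [hrec k hk]
  simp only [Polynomial.derivative_add, Polynomial.derivative_mul, Polynomial.derivative_C,
    Polynomial.derivative_X, zero_mul, mul_one, zero_add]
  linear_combination Polynomial.C (z k) * key
end

section
/- For every k ≥ 0, α_k·δ_k − X·β_k·γ_k = 1 in R[X]. -/
/-- With `α_0 = δ_0 = 1`, `β_0 = γ_0 = 0` and the recursions
`α_i = (1 + m_i n_i X)·α_{i−1} + n_i X·γ_{i−1}`, `β_i = (1 + m_i n_i X)·β_{i−1} + n_i·δ_{i−1}`,
`γ_i = m_i·α_{i−1} + γ_{i−1}`, `δ_i = m_i X·β_{i−1} + δ_{i−1}`, we have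
`α_k·δ_k − X·β_k·γ_k = 1` for every `k ≥ 0`. -/
theorem stmt_15 (R : Type*) [CommRing R] (m n : ℕ → R)
    (α β γ δ : ℕ → Polynomial R)
    (hα0 : α 0 = 1) (hβ0 : β 0 = 0) (hγ0 : γ 0 = 0) (hδ0 : δ 0 = 1)
    (hα : ∀ i, 1 ≤ i → α i =
      (1 + Polynomial.C (m i) * Polynomial.C (n i) * Polynomial.X) * α (i - 1) +
        Polynomial.C (n i) * Polynomial.X * γ (i - 1))
    (hβ : ∀ i, 1 ≤ i → β i =
      (1 + Polynomial.C (m i) * Polynomial.C (n i) * Polynomial.X) * β (i - 1) +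
        Polynomial.C (n i) * δ (i - 1))
    (hγ : ∀ i, 1 ≤ i → γ i = Polynomial.C (m i) * α (i - 1) + γ (i - 1))
    (hδ : ∀ i, 1 ≤ i → δ i = Polynomial.C (m i) * Polynomial.X * β (i - 1) + δ (i - 1))
    (k : ℕ) :
    α k * δ k - Polynomial.X * β k * γ k = 1 := by
  induction k with
  | zero => simp [hα0, hβ0, hγ0, hδ0]
  | succ k ih =>
    have h1 := hα (k+1) (by omega)
    have h2 := hβ (k+1) (by omega)
    have h3 := hγ (k+1) (by omega)
    have h4 := hδ (k+1) (by omega)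
    simp only [Nat.add_sub_cancel] at h1 h2 h3 h4
    rw [h1, h2, h3, h4]
    linear_combination ih
end

section
/- For every k ≥ 1, the ordered matrix product [[1 + m_k n_k ∇, −n_k(t^{-1}−1)], [m_k(t−1), 1]] · [[1 + m_{k−1} n_{k−1} ∇, −n_{k−1}(t^{-1}−1)], [m_{k−1}(t−1), 1]] · ⋯ · [[1 + m_1 n_1 ∇, −n_1(t^{-1}−1)], [m_1(t−1), 1]] equals [[α_k(∇), −(t^{-1}−1)·β_k(∇)], [(t−1)·γ_k(∇), δ_k(∇)]], where α_k(∇) etc. denote the evaluations of the polynomials α_k, β_k, γ_k, δ_k at X = ∇. -/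
/-- Let `t ∈ R` be invertible, `∇ = t − 2 + t⁻¹`. For `k ≥ 1`, the ordered product
`[[1 + m_k n_k ∇, −n_k(t⁻¹−1)], [m_k(t−1), 1]] ⋯ [[1 + m_1 n_1 ∇, −n_1(t⁻¹−1)], [m_1(t−1), 1]]`
equals `[[α_k(∇), −(t⁻¹−1)β_k(∇)], [(t−1)γ_k(∇), δ_k(∇)]]`. -/
theorem stmt_16 (R : Type*) [CommRing R] (t : Rˣ) (m n : ℕ → R)
    (α β γ δ : ℕ → Polynomial R)
    (hα0 : α 0 = 1) (hβ0 : β 0 = 0) (hγ0 : γ 0 = 0) (hδ0 : δ 0 = 1)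
    (hα : ∀ i, 1 ≤ i → α i =
      (1 + Polynomial.C (m i) * Polynomial.C (n i) * Polynomial.X) * α (i - 1) +
        Polynomial.C (n i) * Polynomial.X * γ (i - 1))
    (hβ : ∀ i, 1 ≤ i → β i =
      (1 + Polynomial.C (m i) * Polynomial.C (n i) * Polynomial.X) * β (i - 1) +
        Polynomial.C (n i) * δ (i - 1))
    (hγ : ∀ i, 1 ≤ i → γ i = Polynomial.C (m i) * α (i - 1) + γ (i - 1))
    (hδ : ∀ i, 1 ≤ i → δ i = Polynomial.C (m i) * Polynomial.X * β (i - 1) + δ (i - 1))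
    (nabla : R) (hnabla : nabla = (t : R) - 2 + ((t⁻¹ : Rˣ) : R))
    (P : ℕ → Matrix (Fin 2) (Fin 2) R) (hP0 : P 0 = 1)
    (hPrec : ∀ k, 1 ≤ k → P k =
      !![1 + m k * n k * nabla, -(n k * (((t⁻¹ : Rˣ) : R) - 1));
         m k * ((t : R) - 1), 1] * P (k - 1))
    (k : ℕ) (hk : 1 ≤ k) :
    P k = !![Polynomial.eval nabla (α k), -((((t⁻¹ : Rˣ) : R) - 1) * Polynomial.eval nabla (β k));
             ((t : R) - 1) * Polynomial.eval nabla (γ k), Polynomial.eval nabla (δ k)] := by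
  have key : ((t : R)) * ((t⁻¹ : Rˣ) : R) = 1 := t.mul_inv
  clear hk
  induction k with
  | zero =>
    simp [hP0, hα0, hβ0, hγ0, hδ0, Matrix.one_fin_two]
  | succ j ih =>
    rw [hPrec (j+1) (by omega), Nat.add_sub_cancel, ih,
      hα (j+1) (by omega), hβ (j+1) (by omega), hγ (j+1) (by omega),
      hδ (j+1) (by omega), Nat.add_sub_cancel]
    rw [Matrix.mul_fin_two]
    simp only [Polynomial.eval_add, Polynomial.eval_mul, Polynomial.eval_one,
      Polynomial.eval_C, Polynomial.eval_X]
    subst hnabla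
    ext i l
    fin_cases i <;> fin_cases l <;>
      simp only [Matrix.cons_val', Matrix.cons_val_zero, Matrix.cons_val_one,
        Matrix.head_cons, Matrix.head_fin_const, Matrix.empty_val',
        Matrix.cons_val_fin_one, Fin.isValue, Fin.mk_zero, Fin.mk_one,
        Matrix.of_apply]
    · linear_combination (-(n (j+1) * Polynomial.eval ((t:R) - 2 + ((t⁻¹:Rˣ):R)) (γ j))) * key
    · ring
    · ring
    · linear_combination (-(m (j+1) * Polynomial.eval ((t:R) - 2 + ((t⁻¹:Rˣ):R)) (β j))) * key
end

section
/- The space Hom_{K[X]}(M, F) of K[X]-module homomorphisms from M to F is an F-vector space of dimension ν, and the subspace W = {f ∈ Hom_{K[X]}(M, F) : f vanishes on M'} has codimension equal to #{i : e_i = 1}, the number of indices i with e_i = 1. -/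
/-!
Since `h` kills `F = K[X]/(h)`, a `K[X]`-linear map `K[X]/(h^e) → F` with `e ≥ 1` is determined
by the image of `1`, which can be arbitrary; hence `f ↦ (f (Pi.single i 1))ᵢ` identifies
`Hom(M, F)` with `F^ν`. The `h`-torsion of `K[X]/(h^e)` is everything if `e = 1`, and lies in
`h • K[X]/(h^e)` if `e ≥ 2`, where every map to `F` vanishes. So `W` is the kernel of the
surjection `F^ν → F^{#{i : e_i = 1}}` reading off the coordinates with `e_i = 1`.
-/

namespace Ideal.Quotient

variable {R : Type*} [CommRing R]

theorem smul_eq_zero_of_mem {J : Ideal R} {r : R} (hr : r ∈ J) (x : R ⧸ J) : r • x = 0 := by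
  rw [Algebra.smul_def, algebraMap_eq, eq_zero_iff_mem.2 hr, zero_mul]

noncomputable def homEquivOfLE {I J : Ideal R} (hIJ : I ≤ J) :
    ((R ⧸ I) →ₗ[R] R ⧸ J) ≃ₗ[R ⧸ J] R ⧸ J where
  toFun f := f 1
  map_add' _ _ := rfl
  map_smul' _ _ := rfl
  invFun c := c • (factorₐ R hIJ).toLinearMap
  left_inv f := by
    ext
    simp
  right_inv c := by simp

noncomputable def piHomEquivOfLE {ι : Type*} [Fintype ι] [DecidableEq ι] {I : ι → Ideal R}
    {J : Ideal R} (hIJ : ∀ i, I i ≤ J) :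
    ((∀ i, R ⧸ I i) →ₗ[R] R ⧸ J) ≃ₗ[R ⧸ J] (ι → R ⧸ J) :=
  (LinearMap.lsum R (fun i => R ⧸ I i) (R ⧸ J)).symm ≪≫ₗ
    LinearEquiv.piCongrRight fun i => homEquivOfLE (hIJ i)

theorem exists_eq_smul_of_smul_eq_zero [IsDomain R] {h : R} (hh : h ≠ 0) {n : ℕ} (hn : 2 ≤ n)
    {x : R ⧸ span {h ^ n}} (hx : h • x = 0) : ∃ y, x = h • y := by
  obtain ⟨q, rfl⟩ := mk_surjective x
  rw [Algebra.smul_def, algebraMap_eq, ← map_mul, eq_zero_iff_mem, mem_span_singleton,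
    ← Nat.sub_add_cancel (by omega : 1 ≤ n), pow_succ', mul_dvd_mul_iff_left hh] at hx
  obtain ⟨r, rfl⟩ := (dvd_pow_self h (by omega)).trans hx
  exact ⟨mk _ r, by rw [Algebra.smul_def, algebraMap_eq, ← map_mul]⟩

theorem torsionBy_le_ker_iff [IsDomain R] {h : R} (hh : h ≠ 0) {n : ℕ} (hn : 1 ≤ n)
    (g : (R ⧸ span {h ^ n}) →ₗ[R] R ⧸ span {h}) :
    Submodule.torsionBy R _ h ≤ LinearMap.ker g ↔ (n = 1 → g 1 = 0) := by
  constructor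
  · rintro hg rfl
    exact hg (smul_eq_zero_of_mem (by simp) 1)
  · intro hg x hx
    rw [Submodule.mem_torsionBy_iff] at hx
    rw [LinearMap.mem_ker]
    rcases (by omega : n = 1 ∨ 2 ≤ n) with rfl | hn
    · obtain ⟨p, rfl⟩ := mk_surjective x
      rw [← mul_one (mk _ p), ← algebraMap_eq, ← Algebra.smul_def, map_smul, hg rfl, smul_zero]
    · obtain ⟨y, rfl⟩ := exists_eq_smul_of_smul_eq_zero hh hn hx
      rw [map_smul]
      exact smul_eq_zero_of_mem (mem_span_singleton_self h) _

end Ideal.Quotient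

theorem Submodule.torsionBy_pi_le_ker_iff {R ι N : Type*} [CommRing R] [Fintype ι] [DecidableEq ι]
    {φ : ι → Type*} [∀ i, AddCommGroup (φ i)] [∀ i, Module R (φ i)] [AddCommGroup N] [Module R N]
    (a : R) (f : (∀ i, φ i) →ₗ[R] N) :
    torsionBy R (∀ i, φ i) a ≤ LinearMap.ker f ↔
      ∀ i, torsionBy R (φ i) a ≤ LinearMap.ker (f ∘ₗ LinearMap.single R φ i) := by
  simp only [SetLike.le_def, mem_torsionBy_iff, LinearMap.mem_ker]
  constructor
  · intro hf i x hx
    exact hf (by rw [← map_smul, hx, map_zero])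
  · intro hf x hx
    rw [← Finset.univ_sum_single x, map_sum]
    exact Finset.sum_eq_zero fun i _ => hf i (congrFun hx i)

open Polynomial in
set_option synthInstance.maxHeartbeats 1000000 in
set_option maxHeartbeats 1000000 in
/-- Let `h ∈ K[X]` be irreducible, `F = K[X]/(h)`, and `M = ⊕_{i=1}^{ν} K[X]/(h^{e_i})` with
each `e_i ≥ 1`. Then `Hom_{K[X]}(M, F)` is an `F`-vector space of dimension `ν`, and the
subspace `W` of homomorphisms vanishing on `M' = {a ∈ M : h·a = 0}` has codimension
`#{i : e_i = 1}`. -/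
theorem stmt_17 (K : Type*) [Field K] (h : K[X]) (hirr : Irreducible h)
    (ν : ℕ) (e : Fin ν → ℕ) (he : ∀ i, 1 ≤ e i)
    (W : Submodule (K[X] ⧸ Ideal.span {h})
      ((∀ i : Fin ν, K[X] ⧸ Ideal.span {h ^ e i}) →ₗ[K[X]] K[X] ⧸ Ideal.span {h}))
    (hW : ∀ f, f ∈ W ↔ ∀ a : (∀ i : Fin ν, K[X] ⧸ Ideal.span {h ^ e i}),
      h • a = 0 → f a = 0) :
    Module.finrank (K[X] ⧸ Ideal.span {h})
        ((∀ i : Fin ν, K[X] ⧸ Ideal.span {h ^ e i}) →ₗ[K[X]] K[X] ⧸ Ideal.span {h}) = ν ∧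
    Module.finrank (K[X] ⧸ Ideal.span {h}) W +
      (Finset.univ.filter (fun i => e i = 1)).card = ν := by
  have := PrincipalIdealRing.isMaximal_of_irreducible hirr
  let := Ideal.Quotient.field (Ideal.span {h})
  let Φ := Ideal.Quotient.piHomEquivOfLE fun i =>
    Ideal.span_singleton_le_span_singleton.2 (dvd_pow_self h (Nat.one_le_iff_ne_zero.1 (he i)))
  let ψ := LinearMap.funLeft (K[X] ⧸ Ideal.span {h}) (K[X] ⧸ Ideal.span {h})
    (Subtype.val : {i // e i = 1} → Fin ν) ∘ₗ Φ.toLinearMap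
  have hψ : Function.Surjective ψ :=
    (LinearMap.funLeft_surjective_of_injective (K[X] ⧸ Ideal.span {h}) _ _
      Subtype.val_injective).comp Φ.surjective
  have hWψ : W = LinearMap.ker ψ := by
    ext f
    rw [hW, LinearMap.mem_ker, funext_iff]
    change Submodule.torsionBy K[X] _ h ≤ LinearMap.ker f ↔ _
    simp_rw [Submodule.torsionBy_pi_le_ker_iff,
      Ideal.Quotient.torsionBy_le_ker_iff hirr.ne_zero (he _)]
    exact ⟨fun H j => H j j.2, fun H i hi => H ⟨i, hi⟩⟩
  have := Module.Finite.equiv Φ.symm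
  have hrank := ψ.finrank_range_add_finrank_ker
  rw [LinearMap.range_eq_top.2 hψ, finrank_top, Module.finrank_fintype_fun_eq_card, Φ.finrank_eq,
    Module.finrank_fin_fun, ← hWψ, Fintype.card_subtype] at hrank
  exact ⟨by rw [Φ.finrank_eq, Module.finrank_fin_fun], by omega⟩
end

section
/- For every k ≥ 1, α_k'·α_{k−1} − α_k·α_{k−1}' = n_k · Σ_{i=1}^{k} m_i·α_{i−1}² in R[X], where α' denotes the formal derivative with respect to X. (In particular, evaluating at any λ ∈ R with α_k(λ) = 0 and α_{k−1}(λ) ≠ 0, and with n_k invertible, one gets: α_k'(λ) = 0 if and only if Σ_{i=1}^{k} m_i·α_{i−1}(λ)² = 0.) -/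
open Polynomial

/-- With `α_0 = 1`, `γ_0 = 0`, `α_i = (1 + m_i n_i X)·α_{i−1} + n_i X·γ_{i−1}` and
`γ_i = m_i·α_{i−1} + γ_{i−1}`, we have, for every `k ≥ 1`,
`α_k'·α_{k−1} − α_k·α_{k−1}' = n_k·Σ_{i=1}^{k} m_i·α_{i−1}²`. -/
theorem stmt_18 (R : Type*) [CommRing R] (m n : ℕ → R)
    (α γ : ℕ → Polynomial R)
    (hα0 : α 0 = 1) (hγ0 : γ 0 = 0)
    (hα : ∀ i, 1 ≤ i → α i =
      (1 + Polynomial.C (m i) * Polynomial.C (n i) * Polynomial.X) * α (i - 1) +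
        Polynomial.C (n i) * Polynomial.X * γ (i - 1))
    (hγ : ∀ i, 1 ≤ i → γ i = Polynomial.C (m i) * α (i - 1) + γ (i - 1))
    (k : ℕ) (hk : 1 ≤ k) :
    Polynomial.derivative (α k) * α (k - 1) - α k * Polynomial.derivative (α (k - 1)) =
      Polynomial.C (n k) * ∑ i ∈ Finset.Icc 1 k, Polynomial.C (m i) * (α (i - 1)) ^ 2 := by
  -- simpler recursion: α i = α (i-1) + n_i X γ_i
  have hα' : ∀ i, 1 ≤ i → α i = α (i - 1) + Polynomial.C (n i) * Polynomial.X * γ i := by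
    intro i hi
    rw [hα i hi, hγ i hi]; ring
  -- key identity by induction
  have key : ∀ j, 1 ≤ j →
      γ j * α (j - 1) + Polynomial.X *
        (Polynomial.derivative (γ j) * α (j - 1) - γ j * Polynomial.derivative (α (j - 1))) =
      ∑ i ∈ Finset.Icc 1 j, Polynomial.C (m i) * (α (i - 1)) ^ 2 := by
    intro j hj
    induction j, hj using Nat.le_induction with
    | base =>
        simp [hγ 1 le_rfl, hγ0, hα0]
    | succ j hj ih =>
        rw [Finset.sum_Icc_succ_top (by omega), ← ih]
        simp only [Nat.add_sub_cancel]
        rw [hγ (j + 1) (by omega)]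
        simp only [Nat.add_sub_cancel]
        rw [hα' j hj]
        simp only [derivative_add, derivative_mul, derivative_C, derivative_X]
        ring
  rw [hα' k hk]
  simp only [derivative_add, derivative_mul, derivative_C, derivative_X]
  rw [← key k hk]
  ring
end
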